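/- (Lemma 4.2, canonical decomposition of Δf.) Let A be an integral domain of characteristic p > 0 and f ∈ A[X] with f(0) = 0, m := deg f ≥ 1 and p ∤ m; set Δf(X,Y) := f(X+Y) − f(X) − f(Y) ∈ A[X,Y]. Then there exists a unique pair (F, P) of polynomials in A[X,Y] such that: (a) Δf(X,Y) = F(X,Y) + P(X,Y) − P(X,Y)^p; (b) every monomial X^e Y^j occurring in F satisfies e < m ≤ p·e (equivalently e = i·p^{n(i)} with p ∤ i and n(i) maximal such that i·p^{n(i)} < m); (c) every monomial occurring in P has X-degree at least 1. Moreover this P automatically satisfies deg_X P ≤ ⌊(m−1)/p⌋. -/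

import Mathlib

/-!
Write `d = ⌊(m - 1)/p⌋`, call the exponent `e` of a monomial `X^e Y^j` its `X`-degree, and let
`L` keep the monomials of `X`-degree in `[1, d]`. Since `Δf` has `X`-degrees in `(0, m)` and
Frobenius multiplies `X`-degrees by `p`, condition (b) on `F = Δf - P + P^p` amounts to
`L F = 0`, i.e. `P = L Δf + L (P^p)` for `P` supported in `[1, d]`. The operator
`T = L ∘ (·)^p` pushes the least `X`-degree from `e` to `p e`, so `T^(d+1) = 0` and
`P = ∑_{k ≤ d} T^k (L Δf)` solves this.

For uniqueness, the difference `G` of two solutions satisfies `G - G^p = F' - F`. A monomial of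
`G` of top `X`-degree `N > d` would give `G - G^p` a nonzero coefficient (a `p`-th power, as `A`
is reduced) at `X`-degree `p N ≥ m`; hence `L G = G`, so `G = T G = T^(d+1) G = 0`.
-/

open Polynomial

namespace Polynomial

variable {A : Type*} [CommRing A]

def xSupported (s : Set ℕ) : AddSubgroup A[X][X] where
  carrier := {G | ∀ j e, (G.coeff j).coeff e ≠ 0 → e ∈ s}
  zero_mem' := by simp
  add_mem' {G H} hG hH j e := by
    contrapose!
    intro he
    rw [coeff_add, coeff_add, not_imp_comm.1 (hG j e) he, not_imp_comm.1 (hH j e) he, add_zero]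
  neg_mem' {G} hG j e := by
    rw [coeff_neg, coeff_neg, neg_ne_zero]
    exact hG j e

section xSupported

variable {s t : Set ℕ} {G : A[X][X]}

theorem mem_xSupported : G ∈ xSupported s ↔ ∀ j e, (G.coeff j).coeff e ≠ 0 → e ∈ s :=
  Iff.rfl

theorem coeff_coeff_eq_zero_of_mem_xSupported (hG : G ∈ xSupported s) {e : ℕ} (he : e ∉ s)
    (j : ℕ) : (G.coeff j).coeff e = 0 :=
  not_imp_comm.1 (hG j e) he

theorem xSupported_mono (hst : s ⊆ t) : xSupported (A := A) s ≤ xSupported t :=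
  fun _ hG j e he => hst (hG j e he)

theorem xSupported_inter : xSupported (A := A) (s ∩ t) = xSupported s ⊓ xSupported t := by
  ext G
  simp only [AddSubgroup.mem_inf, mem_xSupported, Set.mem_inter_iff]
  exact ⟨fun h => ⟨fun j e he => (h j e he).1, fun j e he => (h j e he).2⟩,
    fun h j e he => ⟨h.1 j e he, h.2 j e he⟩⟩

theorem xSupported_empty : xSupported (A := A) ∅ = ⊥ := by
  ext G
  simp [mem_xSupported, Polynomial.ext_iff]

theorem mem_xSupported_Ici_one_iff :
    G ∈ xSupported (Set.Ici 1) ↔ ∀ j, (G.coeff j).coeff 0 = 0 := by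
  refine ⟨fun hG j => coeff_coeff_eq_zero_of_mem_xSupported hG (by simp) j, fun hG j e he => ?_⟩
  rw [Set.mem_Ici, Nat.one_le_iff_ne_zero]
  rintro rfl
  exact he (hG j)

theorem exists_mem_xSupported_Iic (G : A[X][X]) : ∃ N, G ∈ xSupported (Set.Iic N) := by
  refine ⟨G.support.sup fun j => (G.coeff j).natDegree, fun j e he => ?_⟩
  have hj : j ∈ G.support := mem_support_iff.2 fun h => he (by rw [h, coeff_zero])
  exact (le_natDegree_of_ne_zero he).trans (Finset.le_sup (f := fun j => (G.coeff j).natDegree) hj)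

theorem natDegree_coeff_le_of_mem_xSupported {N : ℕ} (hG : G ∈ xSupported (Set.Iic N))
    (j : ℕ) : (G.coeff j).natDegree ≤ N :=
  natDegree_le_iff_coeff_eq_zero.2 fun _ he =>
    coeff_coeff_eq_zero_of_mem_xSupported hG (Set.notMem_Iic.2 he) j

end xSupported

noncomputable def restrictX (s : Finset ℕ) : A[X][X] →ₗ[A] A[X][X] :=
  lsum fun j => (monomial j).restrictScalars A ∘ₗ ∑ e ∈ s, monomial e ∘ₗ lcoeff A e

section restrictX

variable {s : Finset ℕ} {t : Set ℕ} {G : A[X][X]}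

theorem coeff_coeff_restrictX (s : Finset ℕ) (G : A[X][X]) (j e : ℕ) :
    ((restrictX s G).coeff j).coeff e = if e ∈ s then (G.coeff j).coeff e else 0 := by
  simp only [restrictX, lsum_apply, Polynomial.sum_def, LinearMap.comp_apply,
    LinearMap.coe_restrictScalars, LinearMap.sum_apply, lcoeff_apply, map_sum, finsetSum_coeff,
    coeff_monomial, Finset.sum_ite_irrel, Finset.sum_const_zero, Finset.sum_ite_eq']
  by_cases hj : j ∈ G.support
  · simp only [if_pos hj, finsetSum_coeff, coeff_monomial, Finset.sum_ite_eq']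
  · simp [hj, notMem_support_iff.1 hj]

theorem restrictX_mem_xSupported (hG : G ∈ xSupported t) :
    restrictX s G ∈ xSupported (↑s ∩ t) := by
  intro j e he
  rw [coeff_coeff_restrictX] at he
  split_ifs at he with hs
  exacts [⟨hs, hG j e he⟩, absurd rfl he]

theorem restrictX_mem_xSupported_self (s : Finset ℕ) (G : A[X][X]) :
    restrictX s G ∈ xSupported s :=
  xSupported_mono Set.inter_subset_left <|
    restrictX_mem_xSupported (t := Set.univ) fun _ _ _ => trivial

theorem restrictX_eq_self (hG : G ∈ xSupported s) : restrictX s G = G := by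
  ext j e
  rw [coeff_coeff_restrictX, ite_eq_left_iff]
  exact fun hs => (coeff_coeff_eq_zero_of_mem_xSupported hG hs j).symm

theorem restrictX_eq_zero (hG : G ∈ xSupported t) (hst : Disjoint (s : Set ℕ) t) :
    restrictX s G = 0 := by
  ext j e
  rw [coeff_coeff_restrictX, coeff_zero, coeff_zero, ite_eq_right_iff]
  exact fun hs => coeff_coeff_eq_zero_of_mem_xSupported hG (hst.notMem_of_mem_left hs) j

theorem mem_xSupported_diff_of_restrictX_eq_zero (hG : G ∈ xSupported t) (h : restrictX s G = 0) :
    G ∈ xSupported (t \ s) := by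
  intro j e he
  refine ⟨hG j e he, fun hs => he ?_⟩
  simpa [coeff_coeff_restrictX, Finset.mem_coe.1 hs] using
    congr_arg (fun H => (H.coeff j).coeff e) h

end restrictX

section Frobenius

variable {p : ℕ}

theorem coeff_pow_expChar {R : Type*} [CommSemiring R] [ExpChar R p] (Q : R[X]) (n : ℕ) :
    (Q ^ p).coeff n = if p ∣ n then Q.coeff (n / p) ^ p else 0 := by
  rw [← map_frobenius_expand, coeff_map, coeff_expand (expChar_pos R p)]
  split_ifs
  · rfl
  · exact map_zero _

variable [ExpChar A p]

theorem coeff_coeff_pow_expChar (G : A[X][X]) (j e : ℕ) :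
    ((G ^ p).coeff j).coeff e =
      if p ∣ j ∧ p ∣ e then (G.coeff (j / p)).coeff (e / p) ^ p else 0 := by
  rw [coeff_pow_expChar]
  by_cases hj : p ∣ j
  · simp [hj, coeff_pow_expChar]
  · simp [hj]

theorem coeff_coeff_pow_expChar_mul (G : A[X][X]) (j e : ℕ) :
    ((G ^ p).coeff (p * j)).coeff (p * e) = (G.coeff j).coeff e ^ p := by
  simp [coeff_coeff_pow_expChar, Nat.mul_div_cancel_left _ (expChar_pos A p)]

theorem pow_mem_xSupported {s : Set ℕ} {G : A[X][X]} (hG : G ∈ xSupported s) :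
    G ^ p ∈ xSupported ((p * ·) '' s) := by
  intro j e he
  rw [coeff_coeff_pow_expChar] at he
  split_ifs at he with h
  · refine ⟨e / p, hG (j / p) (e / p) fun h0 => he ?_, Nat.mul_div_cancel' h.2⟩
    rw [h0, zero_pow (expChar_pos A p).ne']
  · exact absurd rfl he

end Frobenius

noncomputable def lowFrobenius (p d : ℕ) (G : A[X][X]) : A[X][X] :=
  restrictX (Finset.Icc 1 d) (G ^ p)

noncomputable def canonicalP (p d : ℕ) (D : A[X][X]) : A[X][X] :=
  ∑ k ∈ Finset.range (d + 1), (lowFrobenius p d)^[k] (restrictX (Finset.Icc 1 d) D)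

section Decomposition

variable {p d : ℕ} [ExpChar A p] {G : A[X][X]}

theorem iterate_lowFrobenius_mem_xSupported (hG : G ∈ xSupported (Set.Icc 1 d)) (k : ℕ) :
    (lowFrobenius p d)^[k] G ∈ xSupported (Set.Icc 1 d ∩ Set.Ici (p ^ k)) := by
  induction k with
  | zero => simpa [Set.inter_eq_left.2 Set.Icc_subset_Ici_self] using hG
  | succ k ih =>
    rw [Function.iterate_succ_apply', lowFrobenius]
    refine xSupported_mono ?_ (restrictX_mem_xSupported (pow_mem_xSupported ih))
    rintro _ ⟨hs, e, he, rfl⟩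
    refine ⟨by simpa using hs, ?_⟩
    rw [Set.mem_Ici, pow_succ']
    exact Nat.mul_le_mul_left p he.2.out

theorem iterate_lowFrobenius_eq_zero (hp : 1 < p) (hG : G ∈ xSupported (Set.Icc 1 d)) :
    (lowFrobenius p d)^[d + 1] G = 0 := by
  have hempty : Set.Icc 1 d ∩ Set.Ici (p ^ (d + 1)) = ∅ := by
    have : d + 1 < p ^ (d + 1) := Nat.lt_pow_self hp
    ext e
    simp only [Set.mem_inter_iff, Set.mem_Icc, Set.mem_Ici, Set.mem_empty_iff_false, iff_false]
    omega
  simpa [hempty, xSupported_empty] using iterate_lowFrobenius_mem_xSupported (p := p) hG (d + 1)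

theorem canonicalP_mem_xSupported (D : A[X][X]) :
    canonicalP p d D ∈ xSupported (Set.Icc 1 d) := by
  refine AddSubgroup.sum_mem _ fun k _ =>
    xSupported_mono (Set.inter_subset_left (t := Set.Ici (p ^ k))) ?_
  refine iterate_lowFrobenius_mem_xSupported ?_ k
  simpa using restrictX_mem_xSupported_self (Finset.Icc 1 d) D

theorem restrictX_sub_add_pow_canonicalP (hp : 1 < p) (D : A[X][X]) :
    restrictX (Finset.Icc 1 d) (D - canonicalP p d D + canonicalP p d D ^ p) = 0 := by
  have hLD : restrictX (Finset.Icc 1 d) D ∈ xSupported (Set.Icc 1 d) := by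
    simpa using restrictX_mem_xSupported_self (Finset.Icc 1 d) D
  set Q : ℕ → A[X][X] := fun k => (lowFrobenius p d)^[k] (restrictX (Finset.Icc 1 d) D)
  have hP : canonicalP p d D = ∑ k ∈ Finset.range (d + 1), Q k := rfl
  have hLQ (k : ℕ) : restrictX (Finset.Icc 1 d) (Q k) = Q k := restrictX_eq_self <| by
    simpa using xSupported_mono Set.inter_subset_left (iterate_lowFrobenius_mem_xSupported hLD k)
  have hLQp (k : ℕ) : restrictX (Finset.Icc 1 d) (Q k ^ p) = Q (k + 1) :=
    (Function.iterate_succ_apply' (lowFrobenius p d) k _).symm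
  have hQ : Q (d + 1) = 0 := iterate_lowFrobenius_eq_zero hp hLD
  have htelescope := Finset.sum_range_sub Q (d + 1)
  rw [Finset.sum_sub_distrib] at htelescope
  rw [hP, map_add, map_sub, map_sum, sum_pow_char, map_sum]
  simp only [hLQ, hLQp]
  have hQ0 : Q 0 = restrictX (Finset.Icc 1 d) D := rfl
  linear_combination htelescope + hQ - hQ0

theorem sub_add_pow_canonicalP_mem_xSupported (hp : 1 < p) {m : ℕ} {D : A[X][X]}
    (hD : D ∈ xSupported (Set.Ioo 0 m)) :
    D - canonicalP p ((m - 1) / p) D + canonicalP p ((m - 1) / p) D ^ p ∈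
      xSupported (Set.Ioo ((m - 1) / p) m) := by
  set d := (m - 1) / p
  have hpd : p * d ≤ m - 1 := Nat.mul_div_le (m - 1) p
  have hP := canonicalP_mem_xSupported (p := p) (d := d) D
  have hP' : canonicalP p d D ∈ xSupported (Set.Ioo 0 m) := by
    refine xSupported_mono ?_ hP
    intro e he
    have hem : e ≤ m - 1 := he.2.trans ((Nat.le_mul_of_pos_left d (by omega)).trans hpd)
    exact ⟨he.1, by have := he.1; omega⟩
  have hPp : canonicalP p d D ^ p ∈ xSupported (Set.Ioo 0 m) := by
    refine xSupported_mono ?_ (pow_mem_xSupported hP)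
    rintro _ ⟨e, he, rfl⟩
    have : p * e ≤ p * d := Nat.mul_le_mul_left p he.2
    have : 0 < p * e := Nat.mul_pos (by omega) he.1
    show p * e ∈ Set.Ioo 0 m
    exact ⟨this, by omega⟩
  refine xSupported_mono ?_ (mem_xSupported_diff_of_restrictX_eq_zero
    (add_mem (sub_mem hD hP') hPp) (restrictX_sub_add_pow_canonicalP hp D))
  rintro e ⟨⟨he0, hem⟩, hed⟩
  simp only [Finset.coe_Icc, Set.mem_Icc, not_and, not_le] at hed
  exact ⟨hed he0, hem⟩

variable [IsReduced A]

theorem mem_xSupported_Iic_of_sub_pow_mem (hp : 1 < p) {s : Set ℕ} {N : ℕ}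
    (hG : G ∈ xSupported (Set.Iic (N + 1))) (hGs : G - G ^ p ∈ xSupported s)
    (hN : p * (N + 1) ∉ s) : G ∈ xSupported (Set.Iic N) := by
  intro j e he
  rw [Set.mem_Iic]
  by_contra! hNe
  obtain rfl : e = N + 1 := le_antisymm (hG j e he) hNe
  have hzero : (G.coeff (p * j)).coeff (p * (N + 1)) = 0 :=
    coeff_coeff_eq_zero_of_mem_xSupported hG (Set.notMem_Iic.2 (by nlinarith)) _
  have h := coeff_coeff_eq_zero_of_mem_xSupported hGs hN (p * j)
  rw [coeff_sub, coeff_sub, coeff_coeff_pow_expChar_mul, hzero, zero_sub, neg_eq_zero] at h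
  exact he (IsReduced.eq_zero _ ⟨p, h⟩)

theorem eq_zero_of_sub_pow_mem_xSupported (hp : 1 < p) {m : ℕ}
    (hG : G ∈ xSupported (Set.Ici 1)) (hGs : G - G ^ p ∈ xSupported (Set.Ioo ((m - 1) / p) m)) :
    G = 0 := by
  set d := (m - 1) / p
  have hGd : G ∈ xSupported (Set.Iic d) := by
    obtain ⟨N, hN⟩ := exists_mem_xSupported_Iic G
    suffices ∀ n, G ∈ xSupported (Set.Iic (d + n)) → G ∈ xSupported (Set.Iic d) from
      this N (xSupported_mono (Set.Iic_subset_Iic.2 (Nat.le_add_left N d)) hN)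
    intro n
    induction n with
    | zero => exact id
    | succ n ih =>
      refine fun h => ih (mem_xSupported_Iic_of_sub_pow_mem hp h hGs fun hmem => ?_)
      have : m - 1 < p * (d + 1) := Nat.lt_mul_div_succ (m - 1) (by omega)
      have : p * (d + 1) ≤ p * (d + n + 1) := Nat.mul_le_mul_left p (by omega)
      have := hmem.2
      omega
  have hGL : G ∈ xSupported (Set.Icc 1 d) := by
    rw [← Set.Ici_inter_Iic, xSupported_inter]
    exact ⟨hG, hGd⟩
  have hfix : lowFrobenius p d G = G := by
    have hdisj : Disjoint (↑(Finset.Icc 1 d) : Set ℕ) (Set.Ioo d m) := by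
      rw [Finset.coe_Icc, Set.disjoint_left]
      exact fun e he he' => he.2.not_gt he'.1
    calc lowFrobenius p d G
        = restrictX (Finset.Icc 1 d) G - restrictX (Finset.Icc 1 d) (G - G ^ p) := by
          rw [lowFrobenius, map_sub, sub_sub_cancel]
      _ = G := by
        rw [restrictX_eq_zero hGs hdisj, sub_zero, restrictX_eq_self (by simpa using hGL)]
  rw [← Function.iterate_fixed hfix (d + 1)]
  exact iterate_lowFrobenius_eq_zero hp hGL

theorem eq_canonicalP_of_eq_add_sub_pow (hp : 1 < p) {m : ℕ} {D F P : A[X][X]}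
    (hD : D ∈ xSupported (Set.Ioo 0 m)) (hDFP : D = F + P - P ^ p)
    (hF : F ∈ xSupported (Set.Ioo ((m - 1) / p) m)) (hP : P ∈ xSupported (Set.Ici 1)) :
    P = canonicalP p ((m - 1) / p) D := by
  have hP₀ : canonicalP p ((m - 1) / p) D ∈ xSupported (Set.Ici 1) :=
    xSupported_mono Set.Icc_subset_Ici_self (canonicalP_mem_xSupported D)
  rw [← sub_eq_zero]
  refine eq_zero_of_sub_pow_mem_xSupported (m := m) hp (sub_mem hP hP₀) ?_
  convert sub_mem (sub_add_pow_canonicalP_mem_xSupported hp hD) hF using 1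
  rw [sub_pow_expChar]
  linear_combination -hDFP

end Decomposition

theorem setOf_lt_and_le_mul_eq_Ioo {p : ℕ} (hp : 0 < p) (m : ℕ) :
    {e | e < m ∧ m ≤ p * e} = Set.Ioo ((m - 1) / p) m := by
  ext e
  simp only [Set.mem_ofPred_eq, Set.mem_Ioo, Nat.div_lt_iff_lt_mul hp, mul_comm e p]
  omega

-- `Δf(X, Y) = f(X + Y) - f(X) - f(Y)`, the inner variable being `X = C X` and the outer one `Y`.
noncomputable def delta (f : A[X]) : A[X][X] :=
  (f.map C).comp (C X + X) - C f - f.map C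

theorem coeff_coeff_delta (f : A[X]) (j e : ℕ) :
    ((delta f).coeff j).coeff e = ((e + j).choose j : A) * f.coeff (e + j)
      - (if j = 0 then f.coeff e else 0) - (if e = 0 then f.coeff j else 0) := by
  have htaylor : (f.map C).comp (C X + X) = taylor X (f.map C) := by
    rw [taylor_apply, add_comm]
  have hhasse : hasseDeriv j (f.map C) = (hasseDeriv j f).map C := by
    ext n
    rw [hasseDeriv_coeff, coeff_map, coeff_map, hasseDeriv_coeff, map_mul, map_natCast]
  have hcoeff : (delta f).coeff j = hasseDeriv j f - (if j = 0 then f else 0) - C (f.coeff j) := by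
    rw [delta, coeff_sub, coeff_sub, htaylor, taylor_coeff, hhasse, eval_map, eval₂_C_X, coeff_C,
      coeff_map]
  rw [hcoeff, coeff_sub, coeff_sub, hasseDeriv_coeff, apply_ite (coeff · e), coeff_zero, coeff_C]

theorem delta_mem_xSupported {f : A[X]} {m : ℕ} (hf0 : f.coeff 0 = 0) (hm : f.natDegree ≤ m) :
    delta f ∈ xSupported (Set.Ioo 0 m) := by
  intro j e he
  contrapose! he
  rw [coeff_coeff_delta]
  rcases Nat.eq_zero_or_pos e with rfl | he0
  · rcases eq_or_ne j 0 with rfl | hj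
    · simp [hf0]
    · simp [hj]
  · have hme : m ≤ e := by simpa [he0] using he
    rcases eq_or_ne j 0 with rfl | hj
    · simp [he0.ne']
    · simp [hj, he0.ne', coeff_eq_zero_of_natDegree_lt (by omega : f.natDegree < e + j)]

end Polynomial

theorem delta_decomposition_general (p : ℕ) (hp : p.Prime)
    (A : Type*) [CommRing A] [IsDomain A] [CharP A p]
    (f : A[X]) (hf0 : f.coeff 0 = 0) (m : ℕ) (hm : f.natDegree = m) :
    (∃! FP : Polynomial A[X] × Polynomial A[X],
      ((f.map C).comp ((C X : Polynomial A[X]) + X) - C f - f.map C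
          = FP.1 + FP.2 - FP.2 ^ p) ∧
      (∀ j e : ℕ, (FP.1.coeff j).coeff e ≠ 0 → e < m ∧ m ≤ p * e) ∧
      (∀ j : ℕ, (FP.2.coeff j).coeff 0 = 0)) ∧
    (∀ FP : Polynomial A[X] × Polynomial A[X],
      ((f.map C).comp ((C X : Polynomial A[X]) + X) - C f - f.map C
          = FP.1 + FP.2 - FP.2 ^ p) →
      (∀ j e : ℕ, (FP.1.coeff j).coeff e ≠ 0 → e < m ∧ m ≤ p * e) →
      (∀ j : ℕ, (FP.2.coeff j).coeff 0 = 0) →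
      ∀ j : ℕ, (FP.2.coeff j).natDegree ≤ (m - 1) / p) := by
  have := Fact.mk hp
  have hS := setOf_lt_and_le_mul_eq_Ioo hp.pos m
  have hD := delta_mem_xSupported hf0 hm.le
  set P := canonicalP p ((m - 1) / p) (delta f)
  have hP : P ∈ xSupported (Set.Icc 1 ((m - 1) / p)) := canonicalP_mem_xSupported _
  have huniq (FP : A[X][X] × A[X][X]) (hDFP : delta f = FP.1 + FP.2 - FP.2 ^ p)
      (hF : FP.1 ∈ xSupported {e | e < m ∧ m ≤ p * e})
      (hP0 : ∀ j, (FP.2.coeff j).coeff 0 = 0) :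
      FP.2 = P :=
    eq_canonicalP_of_eq_add_sub_pow hp.one_lt hD hDFP (hS ▸ hF) (mem_xSupported_Ici_one_iff.2 hP0)
  refine ⟨⟨(delta f - P + P ^ p, P), ⟨(by ring : delta f = _), ?_, ?_⟩, ?_⟩, ?_⟩
  · have hF := sub_add_pow_canonicalP_mem_xSupported hp.one_lt hD
    rwa [← hS] at hF
  · exact mem_xSupported_Ici_one_iff.1 (xSupported_mono Set.Icc_subset_Ici_self hP)
  · rintro ⟨F, P'⟩ ⟨hDFP, hF, hP0⟩
    obtain rfl : P' = P := huniq _ hDFP hF hP0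
    change delta f = F + P - P ^ p at hDFP
    exact Prod.ext (by linear_combination -hDFP) rfl
  · intro FP hDFP hF hP0 j
    rw [huniq FP hDFP hF hP0]
    exact natDegree_coeff_le_of_mem_xSupported (xSupported_mono Set.Icc_subset_Iic_self hP) j

/-- Lemma 4.2 (canonical decomposition of `Δf`): let `A` be an integral domain of
characteristic `p`, `f ∈ A[X]` with `f(0) = 0`, `m = deg f ≥ 1`, `p ∤ m`. Working in
`A[X][Y]` (inner variable `X`, outer variable `Y`), set
`Δf(X,Y) = f(X+Y) - f(X) - f(Y)`. Then there is a unique pair `(F, P)` with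
`Δf = F + P - P^p`, every monomial `X^e Y^j` of `F` satisfying `e < m ≤ p·e`, and every
monomial of `P` having `X`-degree at least `1`; moreover `deg_X P ≤ ⌊(m-1)/p⌋`. -/
theorem delta_decomposition (p : ℕ) (hp : p.Prime)
    (A : Type*) [CommRing A] [IsDomain A] [CharP A p]
    (f : A[X]) (hf0 : f.coeff 0 = 0) (m : ℕ) (hm : f.natDegree = m)
    (hm1 : 1 ≤ m) (hpm : ¬ p ∣ m) :
    (∃! FP : Polynomial A[X] × Polynomial A[X],
      ((f.map C).comp ((C X : Polynomial A[X]) + X) - C f - f.map C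
          = FP.1 + FP.2 - FP.2 ^ p) ∧
      (∀ j e : ℕ, (FP.1.coeff j).coeff e ≠ 0 → e < m ∧ m ≤ p * e) ∧
      (∀ j : ℕ, (FP.2.coeff j).coeff 0 = 0)) ∧
    (∀ FP : Polynomial A[X] × Polynomial A[X],
      ((f.map C).comp ((C X : Polynomial A[X]) + X) - C f - f.map C
          = FP.1 + FP.2 - FP.2 ^ p) →
      (∀ j e : ℕ, (FP.1.coeff j).coeff e ≠ 0 → e < m ∧ m ≤ p * e) →
      (∀ j : ℕ, (FP.2.coeff j).coeff 0 = 0) →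
      ∀ j : ℕ, (FP.2.coeff j).natDegree ≤ (m - 1) / p) :=
  delta_decomposition_general p hp A f hf0 m hm
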